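/- arXiv:1512.03022 — 2 statements merged into one kernel-verified Lean document; each statement's English description precedes it below -/
import Mathlib

section
/- Let V be a finite set, L ⊆ V a distinguished subset, and r : V → V a function. Define the pointer-jumping maps g_t : V → V by g_0 = r and g_{t+1}(v) = g_t(v) if g_t(v) ∈ L, and g_{t+1}(v) = g_t(g_t(v)) otherwise. Then for every v ∈ V: if there exists k ≥ 1 with r^k(v) ∈ L and the least such k satisfies k ≤ 2^t, then g_t(v) ∈ L; moreover, if the least such k does not exist or exceeds 2^t, then g_t(v) = r^{(2^t)}(v). -/
/-- Pointer jumping maps: `pjump r L 0 = r`, and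
`pjump r L (t+1) v = pjump r L t v` if the latter is in `L`,
otherwise `pjump r L t (pjump r L t v)`. -/
def pjump {V : Type*} [DecidableEq V] (r : V → V) (L : Finset V) : ℕ → V → V
  | 0 => r
  | t + 1 => fun v =>
      if pjump r L t v ∈ L then pjump r L t v
      else pjump r L t (pjump r L t v)

theorem pjump_aux {V : Type*} [DecidableEq V] (r : V → V) (L : Finset V) :
    ∀ (t : ℕ) (v : V),
      ((∃ k, 1 ≤ k ∧ k ≤ 2 ^ t ∧ r^[k] v ∈ L) → pjump r L t v ∈ L) ∧
      ((∀ k, 1 ≤ k → k ≤ 2 ^ t → r^[k] v ∉ L) → pjump r L t v = r^[2 ^ t] v) := by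
  intro t
  induction t with
  | zero =>
    intro v
    constructor
    · rintro ⟨k, hk1, hk2, hkL⟩
      interval_cases k
      simpa [pjump] using hkL
    · intro _; simp [pjump]
  | succ t ih =>
    intro v
    have hN : 1 ≤ 2 ^ t := Nat.one_le_two_pow
    have h2t : 2 ^ (t + 1) = 2 ^ t + 2 ^ t := by rw [pow_succ]; omega
    constructor
    · rintro ⟨k, hk1, hk2, hkL⟩
      by_cases hA : ∃ k, 1 ≤ k ∧ k ≤ 2 ^ t ∧ r^[k] v ∈ L
      · have := (ih v).1 hA
        simp [pjump, this]
      · push_neg at hA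
        have hkgt : 2 ^ t < k := by
          by_contra h
          push_neg at h
          exact hA k hk1 h hkL
        have hEq : pjump r L t v = r^[2 ^ t] v := (ih v).2 hA
        have hNot : r^[2 ^ t] v ∉ L := hA _ hN le_rfl
        have hstep : pjump r L (t + 1) v = pjump r L t (r^[2 ^ t] v) := by
          simp [pjump, hEq, hNot]
        rw [hstep]
        apply (ih (r^[2 ^ t] v)).1
        refine ⟨k - 2 ^ t, by omega, by omega, ?_⟩
        rw [← Function.iterate_add_apply]
        have : k - 2 ^ t + 2 ^ t = k := by omega
        rw [this]; exact hkL
    · intro h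
      have h1 : ∀ j, 1 ≤ j → j ≤ 2 ^ t → r^[j] v ∉ L := fun j hj1 hj2 =>
        h j hj1 (by omega)
      have hEq : pjump r L t v = r^[2 ^ t] v := (ih v).2 h1
      have hNot : r^[2 ^ t] v ∉ L := h1 _ hN le_rfl
      have hstep : pjump r L (t + 1) v = pjump r L t (r^[2 ^ t] v) := by
        simp [pjump, hEq, hNot]
      rw [hstep]
      have h2 : ∀ j, 1 ≤ j → j ≤ 2 ^ t → r^[j] (r^[2 ^ t] v) ∉ L := by
        intro j hj1 hj2
        rw [← Function.iterate_add_apply]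
        exact h _ (by omega) (by omega)
      rw [(ih (r^[2 ^ t] v)).2 h2, ← Function.iterate_add_apply]
      congr 1
      omega

/-- For every node `v` of a finite set `V`: if there is some `k ≥ 1` with `r^[k] v ∈ L`
and the least such `k` satisfies `k ≤ 2^t`, then `pjump r L t v ∈ L`; and if no
`k` with `1 ≤ k ≤ 2^t` satisfies `r^[k] v ∈ L` (i.e. the least such `k` does not
exist or exceeds `2^t`), then `pjump r L t v = r^[2^t] v`. -/
theorem pointer_jumping_correct {V : Type*} [Fintype V] [DecidableEq V]
    (r : V → V) (L : Finset V) (t : ℕ) (v : V) :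
    ((∃ k, 1 ≤ k ∧ r^[k] v ∈ L ∧ (∀ j, 1 ≤ j → j < k → r^[j] v ∉ L) ∧ k ≤ 2 ^ t) →
        pjump r L t v ∈ L) ∧
    ((∀ k, 1 ≤ k → k ≤ 2 ^ t → r^[k] v ∉ L) → pjump r L t v = r^[2 ^ t] v) := by
  constructor
  · rintro ⟨k, hk1, hkL, _, hk2⟩
    exact (pjump_aux r L t v).1 ⟨k, hk1, hk2, hkL⟩
  · exact (pjump_aux r L t v).2
end

section
/- For every constant C ≥ 1 there exists a constant c > 0 such that the following holds: for every real x ≥ 1 and every sequence a : ℕ → ℝ with a(i) ≥ 0 for all i, a(1) ≤ C·x, and a(i+1) ≤ a(i) + C·(x + √(a(i)·x)) for all i ≥ 1, one has a(i) ≤ c · i² · x for all i ≥ 1. -/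
/-- Deterministic layer-growth recursion: for every constant `C ≥ 1` there is a
constant `c > 0` such that for every real `x ≥ 1` and every nonnegative sequence
`a` with `a 1 ≤ C·x` and `a (i+1) ≤ a i + C·(x + √(a i · x))` for all `i ≥ 1`,
one has `a i ≤ c · i² · x` for all `i ≥ 1`. -/
theorem layer_recursion_quadratic_growth (C : ℝ) (hC : 1 ≤ C) :
    ∃ c : ℝ, 0 < c ∧
      ∀ (x : ℝ), 1 ≤ x →
      ∀ (a : ℕ → ℝ), (∀ i, 0 ≤ a i) → a 1 ≤ C * x →
        (∀ i, 1 ≤ i → a (i + 1) ≤ a i + C * (x + Real.sqrt (a i * x))) →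
        ∀ i, 1 ≤ i → a i ≤ c * (i : ℝ) ^ 2 * x := by
  refine ⟨9 * C ^ 2, by positivity, ?_⟩
  intro x hx a ha h1 hrec i hi
  induction i, hi using Nat.le_induction with
  | base =>
    push_cast
    nlinarith [ha 1]
  | succ i hi ih =>
    have hi' : (1 : ℝ) ≤ (i : ℝ) := by exact_mod_cast hi
    have hsq : Real.sqrt (a i * x) ≤ 3 * C * i * x := by
      have hle : a i * x ≤ (3 * C * i * x) ^ 2 := by nlinarith [ha i, hx]
      calc Real.sqrt (a i * x) ≤ Real.sqrt ((3 * C * i * x) ^ 2) :=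
            Real.sqrt_le_sqrt hle
        _ = 3 * C * i * x := Real.sqrt_sq (by positivity)
    have hr := hrec i hi
    push_cast
    have h2 : C * x ≤ C ^ 2 * x := by
      have : C ≤ C ^ 2 := by nlinarith
      exact mul_le_mul_of_nonneg_right this (by linarith)
    have h3 : 0 ≤ C ^ 2 * (i : ℝ) * x := by positivity
    nlinarith [ha i, hx, hi']
end
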